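/- arXiv:1911.04130 — 3 statements merged into one kernel-verified Lean document; each statement's English description precedes it below -/
import Mathlib

section
/- Let Q = Q+(2n−1,q) with n ≥ 2, let P0 be a point of Q, and let P and P' be two distinct points of P0⊥ \ {P0}. If the projective line ℓ spanned by P and P' is not contained in Q, then the number of points of Q lying in P⊥ ∩ P'⊥ but not in P0⊥ equals q^{2n−4}. -/
/-- `thgeom q k = 1 + q + ⋯ + q^(k-1)`, i.e. `θ_{k-1}` in the paper's notation,
so that `θ_j = thgeom q (j+1)` and `θ_{-1} = thgeom q 0 = 0`. -/
def thgeom (q k : ℕ) : ℕ := ∑ i ∈ Finset.range k, q ^ i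

variable {𝔽 : Type} [Field 𝔽]

/-- The hyperbolic quadratic form `f(x) = x_1x_2 + x_3x_4 + ⋯ + x_{2m-1}x_{2m}` on `𝔽^{2m}`. -/
def hypQ (m : ℕ) (v : Fin (2 * m) → 𝔽) : 𝔽 :=
  ∑ i : Fin m, v ⟨2 * i.val, by have := i.isLt; omega⟩ *
    v ⟨2 * i.val + 1, by have := i.isLt; omega⟩

/-- The polar bilinear form `b(x,y) = f(x+y) − f(x) − f(y)`. -/
def hypB (m : ℕ) (v w : Fin (2 * m) → 𝔽) : 𝔽 := hypQ m (v + w) - hypQ m v - hypQ m w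

/-- The projective point `P` lies on the hyperbolic quadric. -/
def onQ {m : ℕ} (P : Projectivization 𝔽 (Fin (2 * m) → 𝔽)) : Prop := hypQ m P.rep = 0

/-- The set of points of the hyperbolic quadric `Q⁺(2m−1, q)` inside `PG(2m−1,q)`. -/
def Qset (𝔽 : Type) [Field 𝔽] (m : ℕ) : Set (Projectivization 𝔽 (Fin (2 * m) → 𝔽)) :=
  {P | onQ P}

/-- Two points are collinear if the polar form vanishes on their representatives. -/
def Collin {m : ℕ} (P P' : Projectivization 𝔽 (Fin (2 * m) → 𝔽)) : Prop :=
  hypB m P.rep P'.rep = 0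

/-- `perp P` is `P⊥`: the set of points of the quadric collinear with `P`. -/
def perp {m : ℕ} (P : Projectivization 𝔽 (Fin (2 * m) → 𝔽)) :
    Set (Projectivization 𝔽 (Fin (2 * m) → 𝔽)) :=
  {P' | onQ P' ∧ Collin P P'}

/-- The set of projective points lying in a subspace `W` of the ambient space. -/
def pts {m : ℕ} (W : Submodule 𝔽 (Fin (2 * m) → 𝔽)) :
    Set (Projectivization 𝔽 (Fin (2 * m) → 𝔽)) :=
  {P | P.rep ∈ W}

/-- `LSet P0` is `L(P0)`: the set of lines of the quadric through `P0`
(projective lines = 2-dimensional subspaces of `V`, entirely contained in the quadric). -/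
def LSet {m : ℕ} (P0 : Projectivization 𝔽 (Fin (2 * m) → 𝔽)) :
    Set (Submodule 𝔽 (Fin (2 * m) → 𝔽)) :=
  {ℓ | Module.finrank 𝔽 ℓ = 2 ∧ P0.rep ∈ ℓ ∧ ∀ P ∈ pts ℓ, onQ P}

instance {𝔽 : Type} [Field 𝔽] [Finite 𝔽] {k : ℕ} :
    Finite (Projectivization 𝔽 (Fin k → 𝔽)) :=
  Quotient.finite _

namespace HypAux

variable {m : ℕ}

def i0 (i : Fin m) : Fin (2*m) := ⟨2*i.val, by have := i.isLt; omega⟩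
def i1 (i : Fin m) : Fin (2*m) := ⟨2*i.val+1, by have := i.isLt; omega⟩

lemma hypQ_apply (v : Fin (2*m) → 𝔽) : hypQ m v = ∑ i : Fin m, v (i0 i) * v (i1 i) := rfl

lemma hypB_eq (x y : Fin (2*m) → 𝔽) :
    hypB m x y = ∑ i : Fin m, (x (i0 i) * y (i1 i) + x (i1 i) * y (i0 i)) := by
  simp only [hypB, hypQ_apply, Pi.add_apply, ← Finset.sum_sub_distrib]
  exact Finset.sum_congr rfl fun i _ => by ring

lemma hypB_symm (x y : Fin (2*m) → 𝔽) : hypB m x y = hypB m y x := by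
  simp only [hypB_eq]; exact Finset.sum_congr rfl fun i _ => by ring

lemma hypB_add_right (x y z : Fin (2*m) → 𝔽) :
    hypB m x (y + z) = hypB m x y + hypB m x z := by
  simp only [hypB_eq, Pi.add_apply, ← Finset.sum_add_distrib]
  exact Finset.sum_congr rfl fun i _ => by ring

lemma hypB_smul_right (x y : Fin (2*m) → 𝔽) (t : 𝔽) :
    hypB m x (t • y) = t * hypB m x y := by
  simp only [hypB_eq, Pi.smul_apply, smul_eq_mul, Finset.mul_sum]
  exact Finset.sum_congr rfl fun i _ => by ring

lemma hypB_sub_right (x y z : Fin (2*m) → 𝔽) :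
    hypB m x (y - z) = hypB m x y - hypB m x z := by
  simp only [hypB_eq, Pi.sub_apply, ← Finset.sum_sub_distrib]
  exact Finset.sum_congr rfl fun i _ => by ring

lemma hypB_add_left (x y z : Fin (2*m) → 𝔽) :
    hypB m (x + y) z = hypB m x z + hypB m y z := by
  rw [hypB_symm, hypB_add_right, hypB_symm z x, hypB_symm z y]

lemma hypB_smul_left (x y : Fin (2*m) → 𝔽) (t : 𝔽) :
    hypB m (t • x) y = t * hypB m x y := by
  rw [hypB_symm, hypB_smul_right, hypB_symm y x]

lemma hypB_self (x : Fin (2*m) → 𝔽) : hypB m x x = 2 * hypQ m x := by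
  simp only [hypB_eq, hypQ_apply, Finset.mul_sum]
  exact Finset.sum_congr rfl fun i _ => by ring

lemma hypQ_add (x y : Fin (2*m) → 𝔽) :
    hypQ m (x + y) = hypQ m x + hypQ m y + hypB m x y := by
  simp only [hypB]; ring

lemma hypQ_smul (t : 𝔽) (x : Fin (2*m) → 𝔽) : hypQ m (t • x) = t^2 * hypQ m x := by
  simp only [hypQ_apply, Pi.smul_apply, smul_eq_mul, Finset.mul_sum]
  exact Finset.sum_congr rfl fun i _ => by ring

/-- The polar form as a linear map in the second argument. -/
def bLin (x : Fin (2*m) → 𝔽) : (Fin (2*m) → 𝔽) →ₗ[𝔽] 𝔽 where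
  toFun y := hypB m x y
  map_add' y z := hypB_add_right x y z
  map_smul' t y := by simp [hypB_smul_right, smul_eq_mul]

@[simp] lemma bLin_apply (x y : Fin (2*m) → 𝔽) : bLin x y = hypB m x y := rfl

lemma sum_pair (g : Fin (2*m) → 𝔽) :
    ∑ j, g j = ∑ i : Fin m, (g (i0 i) + g (i1 i)) := by
  set g' : ℕ → 𝔽 := fun j => if h : j < 2*m then g ⟨j, h⟩ else 0 with hg'
  have h1 : ∑ j, g j = ∑ j ∈ Finset.range (2*m), g' j := by
    rw [← Fin.sum_univ_eq_sum_range]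
    exact Finset.sum_congr rfl fun i _ => by simp [hg', i.isLt]
  have h2 : ∀ k : ℕ, ∑ j ∈ Finset.range (2*k), g' j
      = ∑ i ∈ Finset.range k, (g' (2*i) + g' (2*i+1)) := by
    intro k; induction k with
    | zero => simp
    | succ k ih =>
        have h3 : 2*(k+1) = (2*k)+1+1 := by ring
        rw [h3, Finset.sum_range_succ, Finset.sum_range_succ, ih, Finset.sum_range_succ]
        ring
  rw [h1, h2, ← Fin.sum_univ_eq_sum_range]
  refine Finset.sum_congr rfl fun i _ => ?_
  have := i.isLt
  simp only [hg', i0, i1, dif_pos (by omega : 2*i.val < 2*m),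
    dif_pos (by omega : 2*i.val+1 < 2*m)]

/-- Existence of a vector with prescribed polar products against `p, p', p0`,
provided `p0 ∉ span {p, p'}`. -/
lemma exists_dual_vec (p p' p0 : Fin (2*m) → 𝔽)
    (h : p0 ∉ Submodule.span 𝔽 {p, p'}) :
    ∃ r : Fin (2*m) → 𝔽, hypB m p r = 0 ∧ hypB m p' r = 0 ∧ hypB m p0 r = 1 := by
  obtain ⟨ε₀, hε₀, hbot⟩ := Submodule.exists_dual_map_eq_bot_of_notMem h inferInstance
  set ε : Module.Dual 𝔽 (Fin (2*m) → 𝔽) := (ε₀ p0)⁻¹ • ε₀ with hε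
  have hzero : ∀ y ∈ Submodule.span 𝔽 ({p, p'} : Set (Fin (2*m) → 𝔽)), ε y = 0 := by
    intro y hy
    have h1 : ε₀ y = 0 := by
      have h2 : ε₀ y ∈ Submodule.map ε₀ (Submodule.span 𝔽 ({p, p'} : Set (Fin (2*m) → 𝔽))) :=
        Submodule.mem_map_of_mem hy
      rw [hbot] at h2
      simpa using h2
    simp [hε, h1]
  have hεp : ε p = 0 := hzero p (Submodule.subset_span (by simp))
  have hεp' : ε p' = 0 := hzero p' (Submodule.subset_span (by simp))
  have hεp0 : ε p0 = 1 := by simp [hε, inv_mul_cancel₀ hε₀]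
  set z : Fin (2*m) → 𝔽 := fun j => ε (fun k => if j = k then 1 else 0) with hz
  set r : Fin (2*m) → 𝔽 :=
    fun j => if h2 : j.val % 2 = 0 then z ⟨j.val+1, by have := j.isLt; omega⟩
      else z ⟨j.val-1, by have := j.isLt; omega⟩ with hr
  have hri0 : ∀ i : Fin m, r (i0 i) = z (i1 i) := by
    intro i
    have := i.isLt
    simp only [hr, i0, i1, dif_pos (by omega : (2*i.val) % 2 = 0)]
  have hri1 : ∀ i : Fin m, r (i1 i) = z (i0 i) := by
    intro i
    have := i.isLt
    have hodd : (2*i.val+1) % 2 ≠ 0 := by omega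
    simp only [hr, i0, i1, dif_neg hodd]
    exact congrArg z (Fin.ext (by simp))
  have key : ∀ y : Fin (2*m) → 𝔽, hypB m r y = ε y := by
    intro y
    rw [hypB_eq]
    have h4 : ε y = ∑ j, z j * y j := by
      rw [LinearMap.pi_apply_eq_sum_univ ε y]
      exact Finset.sum_congr rfl fun j _ => by rw [hz]; simp [mul_comm]
    rw [h4, sum_pair (fun j => z j * y j)]
    exact Finset.sum_congr rfl fun i _ => by rw [hri0 i, hri1 i]; ring
  refine ⟨r, ?_, ?_, ?_⟩
  · rw [hypB_symm, key, hεp]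
  · rw [hypB_symm, key, hεp']
  · rw [hypB_symm, key, hεp0]

section Count

variable [Fintype 𝔽]

/-- The central vector count. -/
lemma vec_count (hm : 2 ≤ m) (p p' p0 r : Fin (2*m) → 𝔽)
    (hfp : hypQ m p = 0) (hfp' : hypQ m p' = 0) (hfp0 : hypQ m p0 = 0)
    (hc : hypB m p p' ≠ 0)
    (hpp0 : hypB m p p0 = 0) (hp'p0 : hypB m p' p0 = 0)
    (hpr : hypB m p r = 0) (hp'r : hypB m p' r = 0) (hp0r : hypB m p0 r = 1) :
    Nat.card {v : Fin (2*m) → 𝔽 //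
        hypQ m v = 0 ∧ hypB m p v = 0 ∧ hypB m p' v = 0 ∧ hypB m p0 v ≠ 0}
      = (Fintype.card 𝔽 - 1) * Fintype.card 𝔽 ^ (2*m - 4) := by
  classical
  set vec : Fin 4 → (Fin (2*m) → 𝔽) := ![p, p', p0, r] with hvec
  set φ : (Fin (2*m) → 𝔽) →ₗ[𝔽] (Fin 4 → 𝔽) := LinearMap.pi (fun j => bLin (vec j)) with hφ
  have hc0 : ∀ v : Fin (2*m) → 𝔽, φ v 0 = hypB m p v := fun v => rfl
  have hc1 : ∀ v : Fin (2*m) → 𝔽, φ v 1 = hypB m p' v := fun v => rfl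
  have hc2 : ∀ v : Fin (2*m) → 𝔽, φ v 2 = hypB m p0 v := fun v => rfl
  have hc3 : ∀ v : Fin (2*m) → 𝔽, φ v 3 = hypB m r v := fun v => rfl
  -- membership in the kernel
  have hker : ∀ v : Fin (2*m) → 𝔽, v ∈ LinearMap.ker φ ↔
      (hypB m p v = 0 ∧ hypB m p' v = 0 ∧ hypB m p0 v = 0 ∧ hypB m r v = 0) := by
    intro v
    rw [LinearMap.mem_ker]
    constructor
    · intro h
      exact ⟨(hc0 v).symm.trans (congr_fun h 0), (hc1 v).symm.trans (congr_fun h 1),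
        (hc2 v).symm.trans (congr_fun h 2), (hc3 v).symm.trans (congr_fun h 3)⟩
    · rintro ⟨h1, h2, h3, h4⟩
      funext j
      fin_cases j
      · exact (hc0 v).trans h1
      · exact (hc1 v).trans h2
      · exact (hc2 v).trans h3
      · exact (hc3 v).trans h4
  -- φ is surjective
  have hsurj : Function.Surjective φ := by
    intro y
    set x : Fin (2*m) → 𝔽 := (y 0 / hypB m p p') • p' + (y 1 / hypB m p p') • p + (y 2) • r
      + (y 3 - y 2 * hypB m r r) • p0 with hx
    have e1 : hypB m p p = 0 := by rw [hypB_self, hfp]; ring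
    have e2 : hypB m p' p' = 0 := by rw [hypB_self, hfp']; ring
    have e3 : hypB m p0 p0 = 0 := by rw [hypB_self, hfp0]; ring
    have expand : ∀ u : Fin (2*m) → 𝔽, hypB m u x
        = (y 0 / hypB m p p') * hypB m u p' + (y 1 / hypB m p p') * hypB m u p
          + (y 2) * hypB m u r + (y 3 - y 2 * hypB m r r) * hypB m u p0 := by
      intro u
      rw [hx, hypB_add_right, hypB_add_right, hypB_add_right,
        hypB_smul_right, hypB_smul_right, hypB_smul_right, hypB_smul_right]
    have g0 : φ x 0 = y 0 := by
      rw [hc0, expand p, e1, hpp0, hpr]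
      field_simp
      ring
    have g1 : φ x 1 = y 1 := by
      rw [hc1, expand p', e2, hp'p0, hp'r, hypB_symm p' p]
      rw [hypB_symm p p'] at hc ⊢
      field_simp
      ring
    have g2 : φ x 2 = y 2 := by
      rw [hc2, expand p0, e3, hp0r, hypB_symm p0 p, hypB_symm p0 p', hpp0, hp'p0]
      ring
    have g3 : φ x 3 = y 3 := by
      rw [hc3, expand r, hypB_symm r p, hypB_symm r p', hypB_symm r p0, hpr, hp'r, hp0r]
      ring
    refine ⟨x, funext fun j => ?_⟩
    fin_cases j
    · exact g0
    · exact g1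
    · exact g2
    · exact g3
  -- kernel dimension
  have hrank : Module.finrank 𝔽 (LinearMap.ker φ) = 2*m - 4 := by
    have h1 := LinearMap.finrank_range_add_finrank_ker φ
    have h2 : LinearMap.range φ = ⊤ := LinearMap.range_eq_top.mpr hsurj
    rw [h2, finrank_top] at h1
    have h3 : Module.finrank 𝔽 (Fin 4 → 𝔽) = 4 := by simp
    have h4 : Module.finrank 𝔽 (Fin (2*m) → 𝔽) = 2*m := by simp
    rw [h3, h4] at h1
    omega
  -- kernel cardinality
  have hkcard : Nat.card (LinearMap.ker φ) = Fintype.card 𝔽 ^ (2*m - 4) := by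
    rw [Nat.card_eq_fintype_card, Module.card_eq_pow_finrank (K := 𝔽) (V := LinearMap.ker φ), hrank]
  -- the explicit bijection
  set e : 𝔽 := hypB m r r with he
  set S := {v : Fin (2*m) → 𝔽 //
      hypQ m v = 0 ∧ hypB m p v = 0 ∧ hypB m p' v = 0 ∧ hypB m p0 v ≠ 0} with hS
  -- expansion lemma
  have expand : ∀ (a t : 𝔽) (w : Fin (2*m) → 𝔽),
      (hypB m p w = 0 ∧ hypB m p' w = 0 ∧ hypB m p0 w = 0 ∧ hypB m r w = 0) →
      hypQ m (a • p0 + t • r + w) = a*t + t^2 * hypQ m r + hypQ m w ∧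
      hypB m p (a • p0 + t • r + w) = 0 ∧
      hypB m p' (a • p0 + t • r + w) = 0 ∧
      hypB m p0 (a • p0 + t • r + w) = t ∧
      hypB m r (a • p0 + t • r + w) = a + t * e := by
    intro a t w hw
    obtain ⟨hw1, hw2, hw3, hw4⟩ := hw
    have e3 : hypB m p0 p0 = 0 := by rw [hypB_self, hfp0]; ring
    have X1 : hypB m (a • p0) (t • r) = a * t := by
      rw [hypB_smul_left, hypB_smul_right, hp0r]; ring
    have X2 : hypB m (a • p0 + t • r) w = 0 := by
      rw [hypB_add_left, hypB_smul_left, hypB_smul_left, hw3, hw4]; ring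
    constructor
    · rw [hypQ_add, hypQ_add, hypQ_smul, hypQ_smul, hfp0, X1, X2]; ring
    refine ⟨?_, ?_, ?_, ?_⟩ <;>
      rw [hypB_add_right, hypB_add_right, hypB_smul_right, hypB_smul_right]
    · rw [hpp0, hpr, hw1]; ring
    · rw [hp'p0, hp'r, hw2]; ring
    · rw [e3, hp0r, hw3]; ring
    · rw [hypB_symm r p0, hp0r, ← he, hw4]; ring
  -- the explicit parametrisation
  set A : 𝔽ˣ × (LinearMap.ker φ) → (Fin (2*m) → 𝔽) := fun tw =>
    (-(hypQ m (tw.2 : Fin (2*m) → 𝔽) + (tw.1 : 𝔽)^2 * hypQ m r) * ((tw.1⁻¹ : 𝔽ˣ) : 𝔽)) • p0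
      + ((tw.1 : 𝔽)) • r + (tw.2 : Fin (2*m) → 𝔽) with hA
  have hmemS : ∀ tw : 𝔽ˣ × (LinearMap.ker φ),
      hypQ m (A tw) = 0 ∧ hypB m p (A tw) = 0 ∧ hypB m p' (A tw) = 0
        ∧ hypB m p0 (A tw) ≠ 0 := by
    rintro ⟨t, w⟩
    obtain ⟨h1, h2, h3, h4, h5⟩ := expand
      (-(hypQ m (w : Fin (2*m) → 𝔽) + (t : 𝔽)^2 * hypQ m r) * ((t⁻¹ : 𝔽ˣ) : 𝔽))
      (t : 𝔽) (w : Fin (2*m) → 𝔽) ((hker _).mp w.2)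
    refine ⟨?_, h2, h3, ?_⟩
    · simp only [hA]
      rw [h1]
      have ht : ((t⁻¹ : 𝔽ˣ) : 𝔽) * (t : 𝔽) = 1 := Units.inv_mul t
      rw [mul_assoc, ht, mul_one]
      ring
    · simp only [hA]
      rw [h4]
      exact t.ne_zero
  set F : 𝔽ˣ × (LinearMap.ker φ) → S := fun tw => ⟨A tw, (hmemS tw).1, (hmemS tw).2.1,
    (hmemS tw).2.2.1, (hmemS tw).2.2.2⟩ with hF
  have hbij : Function.Bijective F := by
    constructor
    · rintro ⟨t, w⟩ ⟨t', w'⟩ hfe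
      have hAe : A (t, w) = A (t', w') := congrArg Subtype.val hfe
      obtain ⟨h1, h2, h3, h4, h5⟩ := expand
        (-(hypQ m (w : Fin (2*m) → 𝔽) + (t : 𝔽)^2 * hypQ m r) * ((t⁻¹ : 𝔽ˣ) : 𝔽))
        (t : 𝔽) (w : Fin (2*m) → 𝔽) ((hker _).mp w.2)
      obtain ⟨h1', h2', h3', h4', h5'⟩ := expand
        (-(hypQ m (w' : Fin (2*m) → 𝔽) + (t' : 𝔽)^2 * hypQ m r) * ((t'⁻¹ : 𝔽ˣ) : 𝔽))
        (t' : 𝔽) (w' : Fin (2*m) → 𝔽) ((hker _).mp w'.2)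
      have htt : (t : 𝔽) = (t' : 𝔽) := by
        rw [← h4, ← h4']
        exact congrArg (hypB m p0) hAe
      have htu : t = t' := Units.ext htt
      have haa : (-(hypQ m (w : Fin (2*m) → 𝔽) + (t : 𝔽)^2 * hypQ m r) * ((t⁻¹ : 𝔽ˣ) : 𝔽))
          = (-(hypQ m (w' : Fin (2*m) → 𝔽) + (t' : 𝔽)^2 * hypQ m r) * ((t'⁻¹ : 𝔽ˣ) : 𝔽)) := by
        have h6 := congrArg (hypB m r) hAe
        rw [h5, h5'] at h6
        rw [htu] at h6 ⊢
        exact add_right_cancel h6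
      have hww : (w : Fin (2*m) → 𝔽) = (w' : Fin (2*m) → 𝔽) := by
        have h7 := hAe
        simp only [hA] at h7
        rw [haa, htt] at h7
        exact add_left_cancel h7
      exact Prod.ext htu (Subtype.ext hww)
    · rintro ⟨v, hv1, hv2, hv3, hv4⟩
      set t : 𝔽ˣ := Units.mk0 (hypB m p0 v) hv4 with ht
      set a : 𝔽 := hypB m r v - hypB m p0 v * e with ha
      set w : Fin (2*m) → 𝔽 := v - a • p0 - (hypB m p0 v) • r with hwdef
      have hwk : w ∈ LinearMap.ker φ := by
        rw [hker]
        have e3 : hypB m p0 p0 = 0 := by rw [hypB_self, hfp0]; ring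
        refine ⟨?_, ?_, ?_, ?_⟩ <;>
          rw [hwdef, hypB_sub_right, hypB_sub_right, hypB_smul_right, hypB_smul_right]
        · rw [hv2, hpp0, hpr]; ring
        · rw [hv3, hp'p0, hp'r]; ring
        · rw [e3, hp0r]; ring
        · rw [hypB_symm r p0, hp0r, ha, he]; ring
      have hveq : a • p0 + (hypB m p0 v) • r + w = v := by
        rw [hwdef]; abel
      obtain ⟨h1, h2, h3, h4, h5⟩ := expand a (hypB m p0 v) w ((hker _).mp hwk)
      rw [hveq] at h1 h2 h3 h4 h5
      have hQv : a * hypB m p0 v + (hypB m p0 v)^2 * hypQ m r + hypQ m w = 0 := by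
        rw [← h1]; exact hv1
      have haval : a = -(hypQ m w + (hypB m p0 v)^2 * hypQ m r) * ((t⁻¹ : 𝔽ˣ) : 𝔽) := by
        have htv : ((t⁻¹ : 𝔽ˣ) : 𝔽) = (hypB m p0 v)⁻¹ := by
          simp [ht]
        rw [htv, eq_mul_inv_iff_mul_eq₀ hv4]
        linear_combination hQv
      refine ⟨(t, ⟨w, hwk⟩), ?_⟩
      apply Subtype.ext
      show A (t, ⟨w, hwk⟩) = v
      simp only [hA]
      have htv2 : ((t : 𝔽ˣ) : 𝔽) = hypB m p0 v := rfl
      rw [← hveq]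
      congr 1
      congr 1
      rw [htv2, ← haval]
  have hcard1 : Nat.card (𝔽ˣ × (LinearMap.ker φ)) = Nat.card S :=
    Nat.card_eq_of_bijective F hbij
  rw [← hcard1, Nat.card_prod, hkcard, Nat.card_eq_fintype_card, Fintype.card_units]

end Count
end HypAux


open HypAux in
/-- In `Q⁺(2n−1,q)`, `n ≥ 2`: if `P, P'` are distinct points of
`P0⊥ \ {P0}` and the line `ℓ = ⟨P,P'⟩` is not contained in the quadric,
then `|(P⊥ ∩ P'⊥) \ P0⊥| = q^(2n−4)`. -/
theorem perp_inter_count_of_line_not_on_quadric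
    {𝔽 : Type} [Field 𝔽] [Fintype 𝔽] (q n : ℕ) (hq : Fintype.card 𝔽 = q) (hn : 2 ≤ n)
    (P0 P P' : Projectivization 𝔽 (Fin (2 * n) → 𝔽))
    (hP0 : P0 ∈ Qset 𝔽 n)
    (hP : P ∈ perp P0 \ {P0}) (hP' : P' ∈ perp P0 \ {P0}) (hPP' : P ≠ P')
    (ℓ : Submodule 𝔽 (Fin (2 * n) → 𝔽))
    (hℓ : ℓ = Submodule.span 𝔽 {Projectivization.rep P, Projectivization.rep P'})
    (hℓQ : ¬ ∀ R ∈ pts ℓ, onQ R) :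
    ((perp P ∩ perp P') \ perp P0).ncard = q ^ (2 * n - 4) := by
  classical
  subst hq
  set p : Fin (2*n) → 𝔽 := P.rep with hp
  set p' : Fin (2*n) → 𝔽 := P'.rep with hp'
  set p0 : Fin (2*n) → 𝔽 := P0.rep with hp0
  obtain ⟨⟨honP, hcolP⟩, hPne⟩ := hP
  obtain ⟨⟨honP', hcolP'⟩, hPne'⟩ := hP'
  have hfp : hypQ n p = 0 := honP
  have hfp' : hypQ n p' = 0 := honP'
  have hfp0 : hypQ n p0 = 0 := hP0
  have hp0p : hypB n p0 p = 0 := hcolP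
  have hp0p' : hypB n p0 p' = 0 := hcolP'
  have hpp0 : hypB n p p0 = 0 := by rw [hypB_symm]; exact hp0p
  have hp'p0 : hypB n p' p0 = 0 := by rw [hypB_symm]; exact hp0p'
  -- the line is secant: b(p,p') ≠ 0
  have hc : hypB n p p' ≠ 0 := by
    intro hbc
    apply hℓQ
    intro R hR
    rw [hℓ] at hR
    obtain ⟨a, b, hab⟩ := Submodule.mem_span_pair.mp hR
    show hypQ n R.rep = 0
    rw [← hab, hypQ_add, hypQ_smul, hypQ_smul, hypB_smul_left, hypB_smul_right,
      hfp, hfp', hbc]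
    ring
  -- p0 is not on the line
  have hp0span : p0 ∉ Submodule.span 𝔽 ({p, p'} : Set (Fin (2*n) → 𝔽)) := by
    intro hmem
    obtain ⟨a, b, hab⟩ := Submodule.mem_span_pair.mp hmem
    have h0 : a * b * hypB n p p' = 0 := by
      have := hfp0
      rw [← hab, hypQ_add, hypQ_smul, hypQ_smul, hypB_smul_left, hypB_smul_right,
        hfp, hfp'] at this
      linear_combination this
    have hab0 : a * b = 0 := by
      rcases mul_eq_zero.mp h0 with h | h
      · exact h
      · exact absurd h hc
    rcases mul_eq_zero.mp hab0 with hA | hB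
    · -- a = 0 : p0 = b • p', so P0 = P'
      apply hPne'
      have hb0 : b • p' = p0 := by rw [← hab, hA]; simp
      have hbne : b ≠ 0 := by
        intro h
        apply P0.rep_nonzero
        rw [← hp0, ← hb0, h, zero_smul]
      have : P' = P0 := by
        rw [← Projectivization.mk_rep P', ← Projectivization.mk_rep P0]
        rw [Projectivization.mk_eq_mk_iff]
        exact ⟨(Units.mk0 b hbne)⁻¹, by
          rw [← hp0, ← hp', ← hb0, Units.smul_def, Units.val_inv_eq_inv_val, Units.val_mk0,
            smul_smul, inv_mul_cancel₀ hbne, one_smul]⟩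
      simpa using this
    · -- b = 0 : p0 = a • p, so P0 = P
      apply hPne
      have hb0 : a • p = p0 := by rw [← hab, hB]; simp
      have hbne : a ≠ 0 := by
        intro h
        apply P0.rep_nonzero
        rw [← hp0, ← hb0, h, zero_smul]
      have : P = P0 := by
        rw [← Projectivization.mk_rep P, ← Projectivization.mk_rep P0]
        rw [Projectivization.mk_eq_mk_iff]
        exact ⟨(Units.mk0 a hbne)⁻¹, by
          rw [← hp0, ← hp, ← hb0, Units.smul_def, Units.val_inv_eq_inv_val, Units.val_mk0,
            smul_smul, inv_mul_cancel₀ hbne, one_smul]⟩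
      simpa using this
  obtain ⟨r, hpr, hp'r, hp0r⟩ := exists_dual_vec p p' p0 hp0span
  have hvc := vec_count hn p p' p0 r hfp hfp' hfp0 hc hpp0 hp'p0 hpr hp'r hp0r
  -- characterise members of the projective set
  have hT : ∀ R : Projectivization 𝔽 (Fin (2*n) → 𝔽),
      R ∈ ((perp P ∩ perp P') \ perp P0) ↔
      (hypQ n R.rep = 0 ∧ hypB n p R.rep = 0 ∧ hypB n p' R.rep = 0
        ∧ hypB n p0 R.rep ≠ 0) := by
    intro R
    simp only [Set.mem_diff, Set.mem_inter_iff, perp, Set.mem_setOf_eq, onQ, Collin,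
      ← hp, ← hp', ← hp0]
    tauto
  -- the scaling bijection
  set T := ((perp P ∩ perp P') \ perp P0) with hTdef
  have hBzero : ∀ x : Fin (2*n) → 𝔽, hypB n x 0 = 0 := by
    intro x
    have : (0 : Fin (2*n) → 𝔽) = (0:𝔽) • (0 : Fin (2*n) → 𝔽) := by simp
    rw [this, hypB_smul_right, zero_mul]
  set G : 𝔽ˣ × T → {v : Fin (2*n) → 𝔽 //
      hypQ n v = 0 ∧ hypB n p v = 0 ∧ hypB n p' v = 0 ∧ hypB n p0 v ≠ 0} := fun uR =>
    ⟨(uR.1 : 𝔽) • (uR.2 : Projectivization 𝔽 (Fin (2*n) → 𝔽)).rep, by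
      obtain ⟨h1, h2, h3, h4⟩ := (hT _).mp uR.2.2
      refine ⟨?_, ?_, ?_, ?_⟩
      · rw [hypQ_smul, h1, mul_zero]
      · rw [hypB_smul_right, h2, mul_zero]
      · rw [hypB_smul_right, h3, mul_zero]
      · rw [hypB_smul_right]
        exact mul_ne_zero uR.1.ne_zero h4⟩ with hG
  have hGbij : Function.Bijective G := by
    constructor
    · rintro ⟨u, R⟩ ⟨u', R'⟩ hGe
      have hve : (u : 𝔽) • (R : Projectivization 𝔽 (Fin (2*n) → 𝔽)).rep
          = (u' : 𝔽) • (R' : Projectivization 𝔽 (Fin (2*n) → 𝔽)).rep :=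
        congrArg Subtype.val hGe
      have hRR : (R : Projectivization 𝔽 (Fin (2*n) → 𝔽))
          = (R' : Projectivization 𝔽 (Fin (2*n) → 𝔽)) := by
        rw [← Projectivization.mk_rep (R : Projectivization 𝔽 (Fin (2*n) → 𝔽)),
          ← Projectivization.mk_rep (R' : Projectivization 𝔽 (Fin (2*n) → 𝔽)),
          Projectivization.mk_eq_mk_iff]
        refine ⟨u⁻¹ * u', ?_⟩
        have h9 : ((u:𝔽))⁻¹ • ((u' : 𝔽) • (R' : Projectivization 𝔽 (Fin (2*n) → 𝔽)).rep)
            = (R : Projectivization 𝔽 (Fin (2*n) → 𝔽)).rep := by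
          rw [← hve, smul_smul, inv_mul_cancel₀ u.ne_zero, one_smul]
        rw [Units.smul_def, Units.val_mul, Units.val_inv_eq_inv_val, mul_smul]
        exact h9
      have huu : (u : 𝔽) = (u' : 𝔽) := by
        have h2 := hve
        rw [hRR] at h2
        exact smul_left_injective 𝔽
          (Projectivization.rep_nonzero (R' : Projectivization 𝔽 (Fin (2*n) → 𝔽))) h2
      exact Prod.ext (Units.ext huu) (Subtype.ext hRR)
    · rintro ⟨v, hv1, hv2, hv3, hv4⟩
      have hvne : v ≠ 0 := by
        intro h
        apply hv4
        rw [h, hBzero]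
      set R := Projectivization.mk 𝔽 v hvne with hR
      have hmkeq : Projectivization.mk 𝔽 v hvne
          = Projectivization.mk 𝔽 R.rep R.rep_nonzero := by
        rw [Projectivization.mk_rep, hR]
      obtain ⟨u, hu⟩ := (Projectivization.mk_eq_mk_iff 𝔽 v R.rep hvne R.rep_nonzero).mp hmkeq
      have hu' : (u : 𝔽) • R.rep = v := hu
      have q1 : hypQ n R.rep = 0 := by
        have e1 : (u:𝔽)^2 * hypQ n R.rep = 0 := by rw [← hypQ_smul, hu']; exact hv1
        rcases mul_eq_zero.mp e1 with h | h
        · exact absurd h (pow_ne_zero 2 u.ne_zero)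
        · exact h
      have q2 : hypB n p R.rep = 0 := by
        have e1 : (u:𝔽) * hypB n p R.rep = 0 := by rw [← hypB_smul_right, hu']; exact hv2
        rcases mul_eq_zero.mp e1 with h | h
        · exact absurd h u.ne_zero
        · exact h
      have q3 : hypB n p' R.rep = 0 := by
        have e1 : (u:𝔽) * hypB n p' R.rep = 0 := by rw [← hypB_smul_right, hu']; exact hv3
        rcases mul_eq_zero.mp e1 with h | h
        · exact absurd h u.ne_zero
        · exact h
      have q4 : hypB n p0 R.rep ≠ 0 := by
        intro h
        apply hv4
        rw [← hu', hypB_smul_right, h, mul_zero]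
      refine ⟨(u, ⟨R, (hT R).mpr ⟨q1, q2, q3, q4⟩⟩), ?_⟩
      exact Subtype.ext hu'
  have hGcard : Nat.card (𝔽ˣ × T) = Nat.card {v : Fin (2*n) → 𝔽 //
      hypQ n v = 0 ∧ hypB n p v = 0 ∧ hypB n p' v = 0 ∧ hypB n p0 v ≠ 0} :=
    Nat.card_eq_of_bijective G hGbij
  rw [hvc, Nat.card_prod, Nat.card_eq_fintype_card, Fintype.card_units] at hGcard
  have hTn : (Nat.card T : ℕ) = Set.ncard ((perp P ∩ perp P') \ perp P0) := by
    rw [hTdef]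
    exact Nat.card_coe_set_eq _
  have hq2 : 1 < Fintype.card 𝔽 := Fintype.one_lt_card
  have hfinal := Nat.eq_of_mul_eq_mul_left (show 0 < Fintype.card 𝔽 - 1 by omega) hGcard
  rw [← hTn, hfinal]
end

section
/- Let Q = Q+(2n−1,q) with n ≥ 2, let μ be an integer-valued function on the points of Q satisfying Property (*) with parameter x (x a positive integer), and let P0 be a point of Q. Then Σ_{P2} Σ_{P'∈{P0,P2}⊥} μ(P') = q^{2n−3}·( (q^{n−1}−1)·μ(P0) + x·θ_{n−2} ), where the outer sum ranges over all points P2 of Q that are not collinear with P0. -/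
variable {𝔽 : Type} [Field 𝔽]

/-- Property (*): for every point `P` of the quadric `Q⁺(2n−1,q)`,
`Σ_{P1 ∈ P⊥} μ(P1) = x·θ_{n−2} + q^{n−1}·μ(P)`. -/
def PropStar (q n x : ℕ) {𝔽 : Type} [Field 𝔽]
    (μ : Projectivization 𝔽 (Fin (2 * n) → 𝔽) → ℤ) : Prop :=
  ∀ P ∈ Qset 𝔽 n,
    ∑ᶠ P1 ∈ perp P, μ P1 = (x : ℤ) * thgeom q (n - 1) + (q : ℤ) ^ (n - 1) * μ P

/-- Property (**): for every pair `P1, P2` of non-collinear points of the quadric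
`Q⁺(2n−1,q)`, `Σ_{P' ∈ {P1,P2}⊥} μ(P') = x·θ_{n−3} + q^{n−2}·(μ(P1)+μ(P2))`. -/
def PropStarStar (q n x : ℕ) {𝔽 : Type} [Field 𝔽]
    (μ : Projectivization 𝔽 (Fin (2 * n) → 𝔽) → ℤ) : Prop :=
  ∀ P1 ∈ Qset 𝔽 n, ∀ P2 ∈ Qset 𝔽 n, ¬ Collin P1 P2 →
    ∑ᶠ P' ∈ perp P1 ∩ perp P2, μ P' =
      (x : ℤ) * thgeom q (n - 2) + (q : ℤ) ^ (n - 2) * (μ P1 + μ P2)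

/-! Swapping the two sums, each `P' ∈ P0⊥` is counted once for every `P2 ∉ P0⊥` collinear with
it. For `P' = P0` there is no such `P2`; for `P' ≠ P0` there are exactly `q^{2n-3}`, a count
that holds for every quadratic form with nondegenerate polar form. Normalising `b(P0, P2) = 1`,
the candidates for `P2` are the vectors `w` of an affine subspace of codimension two on which
`f(w + c·P0) = f(w) + c`, so exactly one `q`-th of them are singular. Property (*) at `P0` then
evaluates the weighted sum. -/

theorem finsum_mem_finsum_mem_inter_setOf {α β M : Type*} [AddCommMonoid M] {s : Set α}
    {t : Set β} (hs : s.Finite) (ht : t.Finite) (r : α → β → Prop) (f : β → M) :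
    ∑ᶠ a ∈ s, ∑ᶠ b ∈ t ∩ {b | r a b}, f b = ∑ᶠ b ∈ t, {a ∈ s | r a b}.ncard • f b := by
  classical
  lift s to Finset α using hs
  lift t to Finset β using ht
  have hst (a : α) : (t : Set β) ∩ {b | r a b} = ↑(t.bipartiteAbove r a) := by
    ext; simp [Finset.bipartiteAbove]
  have hts (b : β) : {a ∈ (s : Set α) | r a b} = ↑(s.bipartiteBelow r b) := by
    ext; simp [Finset.bipartiteBelow]
  simp only [hst, hts, finsum_mem_coe_finset, Set.ncard_coe_finset]
  rw [Finset.sum_sum_bipartiteAbove_eq_sum_sum_bipartiteBelow]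
  simp only [Finset.sum_const]

theorem finsum_mem_eq_add_finsum_mem_sdiff_singleton {α M : Type*} [AddCommMonoid M]
    {s : Set α} {a : α} (f : α → M) (hs : s.Finite) (ha : a ∈ s) :
    ∑ᶠ i ∈ s, f i = f a + ∑ᶠ i ∈ s \ {a}, f i := by
  conv_lhs => rw [← Set.insert_sdiff_self_of_mem ha]
  exact finsum_mem_insert f (by simp) hs.sdiff

theorem Nat.eq_pow_sub_of_pow_mul_eq {q a b N : ℕ} (hq : 1 < q) (h : q ^ a * N = q ^ b) :
    N = q ^ (b - a) := by
  have hab : a ≤ b := (Nat.pow_dvd_pow_iff_le_right hq).1 ⟨N, h.symm⟩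
  rw [← Nat.pow_div hab (by omega), ← h, Nat.mul_div_cancel_left _ (by positivity)]

section Counting

variable {K V : Type*} [AddCommGroup V]

theorem Nat.card_eq_card_mul_card_fiber_of_translate [Ring K] [Module K V]
    (p : V → Prop) (φ : V → K) (u : V) (a : K)
    (hp : ∀ w, p w → ∀ c : K, p (w + c • u))
    (hφ : ∀ w, p w → ∀ c : K, φ (w + c • u) = φ w + c) :
    Nat.card {w // p w} = Nat.card K * Nat.card {w // p w ∧ φ w = a} := by
  rw [← Nat.card_prod]
  refine Nat.card_congr
    { toFun := fun w => (φ w - a, ⟨w + (a - φ w) • u, hp _ w.2 _, by rw [hφ _ w.2]; abel⟩)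
      invFun := fun cw => ⟨cw.2 + cw.1 • u, hp _ cw.2.2.1 _⟩
      left_inv := fun w => ?_
      right_inv := fun cw => ?_ }
  · ext; simp only; rw [add_assoc, ← add_smul]; simp
  · obtain ⟨c, w, hw, rfl⟩ := cw
    ext
    · simp [hφ _ hw]
    · simp only; rw [hφ _ hw, add_assoc, ← add_smul]; simp

variable [Field K] [Module K V]

theorem Projectivization.card_apply_rep_ne_zero_eq_card_apply_eq_one (f : V →ₗ[K] K)
    (p : V → Prop) (hp : ∀ c : K, c ≠ 0 → ∀ v, p (c • v) ↔ p v) :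
    Nat.card {P : Projectivization K V // f P.rep ≠ 0 ∧ p P.rep} =
      Nat.card {v : V // f v = 1 ∧ p v} := by
  have hne (v : V) (hv : f v = 1) : v ≠ 0 := by rintro rfl; simp at hv
  refine Nat.card_congr
    { toFun := fun P => ⟨(f P.1.rep)⁻¹ • P.1.rep, by simp [P.2.1],
        (hp _ (inv_ne_zero P.2.1) _).2 P.2.2⟩
      invFun := fun v => ⟨mk K v.1 (hne _ v.2.1), ?_⟩
      left_inv := fun P => ?_
      right_inv := fun v => ?_ }
  · obtain ⟨a, ha⟩ := exists_smul_eq_mk_rep K v.1 (hne _ v.2.1)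
    rw [← ha, Units.smul_def, map_smul, v.2.1, hp _ a.ne_zero]
    exact ⟨by simp, v.2.2⟩
  · ext1
    conv_rhs => rw [← mk_rep P.1]
    exact (mk_eq_mk_iff' K _ _ _ _).2 ⟨(f P.1.rep)⁻¹, rfl⟩
  · obtain ⟨a, ha⟩ := exists_smul_eq_mk_rep K v.1 (hne _ v.2.1)
    ext1
    simp only [← ha, Units.smul_def, map_smul, v.2.1, smul_smul]
    simp

theorem LinearMap.SeparatingLeft.exists_apply_eq_zero_apply_eq_one
    {B : LinearMap.BilinForm K V} (hB : B.SeparatingLeft) {v v' : V}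
    (h : ∀ c : K, v ≠ c • v') : ∃ w, B v' w = 0 ∧ B v w = 1 := by
  by_contra! hcon
  have hker : LinearMap.ker (B v') ≤ LinearMap.ker (B v) := by
    intro w hw
    by_contra hvw
    exact hcon ((B v w)⁻¹ • w) (by simp_all) (by simp_all)
  have hspan : B v ∈ Submodule.span K (Set.range fun _ : Unit => B v') :=
    mem_span_of_iInf_ker_le_ker (by simpa using hker)
  obtain ⟨c, hc⟩ := Submodule.mem_span_singleton.1 (by simpa using hspan)
  refine h c (sub_eq_zero.1 (hB _ fun w => ?_))
  simp [← hc]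

namespace QuadraticMap

variable (Q : QuadraticForm K V) {v₀ v : V}

theorem card_pow_three_mul_card_isotropic_perp_polar_eq_one (hQ : Q.polarBilin.SeparatingLeft)
    (hv₀ : Q v₀ = 0) (hv : v ≠ 0) (hperp : polar Q v v₀ = 0) (hind : ∀ c : K, v₀ ≠ c • v) :
    Nat.card K ^ 3 * Nat.card {w : V // polar Q v₀ w = 1 ∧ Q w = 0 ∧ polar Q v w = 0} =
      Nat.card V := by
  obtain ⟨u₁, -, hu₁⟩ := hQ.exists_apply_eq_zero_apply_eq_one (v := v) (v' := 0) (by simpa)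
  obtain ⟨u₂, hu₂v, hu₂v₀⟩ := hQ.exists_apply_eq_zero_apply_eq_one hind
  simp only [polarBilin_apply_apply] at hu₁ hu₂v hu₂v₀
  have hv₀v₀ : polar Q v₀ v₀ = 0 := by simp [polar_self, hv₀]
  have h₀ : Nat.card V = Nat.card {w : V // True} :=
    (Nat.card_congr (Equiv.subtypeUnivEquiv fun _ => trivial)).symm
  have h₁ := Nat.card_eq_card_mul_card_fiber_of_translate (fun _ => True) (polar Q v) u₁ 0
    (by simp) (fun w _ c => by simp [polar_add_right, polar_smul_right, hu₁])
  have h₂ := Nat.card_eq_card_mul_card_fiber_of_translate (fun w => True ∧ polar Q v w = 0)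
    (polar Q v₀) u₂ 1
    (fun w hw c => by simp_all [polar_add_right, polar_smul_right])
    (fun w _ c => by simp [polar_add_right, polar_smul_right, hu₂v₀])
  have h₃ := Nat.card_eq_card_mul_card_fiber_of_translate
    (fun w => (True ∧ polar Q v w = 0) ∧ polar Q v₀ w = 1) Q v₀ 0
    (fun w hw c => by simp_all [polar_add_right, polar_smul_right])
    (fun w hw c => by
      rw [QuadraticMap.map_add (⇑Q), QuadraticMap.map_smul, hv₀, polar_smul_right, polar_comm,
        hw.2]
      simp)
  have hcongr : Nat.card {w // ((True ∧ polar Q v w = 0) ∧ polar Q v₀ w = 1) ∧ Q w = 0} =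
      Nat.card {w : V // polar Q v₀ w = 1 ∧ Q w = 0 ∧ polar Q v w = 0} :=
    Nat.card_congr (Equiv.subtypeEquivRight fun w => by tauto)
  rw [h₀, h₁, h₂, h₃, hcongr]
  ring

theorem card_pow_three_mul_card_isotropic_points_perp_not_perp
    (hQ : Q.polarBilin.SeparatingLeft) (hv₀ : Q v₀ = 0) (hv : v ≠ 0)
    (hperp : polar Q v v₀ = 0) (hind : ∀ c : K, v₀ ≠ c • v) :
    Nat.card K ^ 3 * Nat.card {P : Projectivization K V //
      polar Q v₀ P.rep ≠ 0 ∧ Q P.rep = 0 ∧ polar Q v P.rep = 0} = Nat.card V := by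
  rw [← card_pow_three_mul_card_isotropic_perp_polar_eq_one Q hQ hv₀ hv hperp hind]
  congr 1
  exact Projectivization.card_apply_rep_ne_zero_eq_card_apply_eq_one (Q.polarBilin v₀)
    (fun w => Q w = 0 ∧ polar Q v w = 0) fun c hc w => by simp [QuadraticMap.map_smul, polar_smul_right, hc]

end QuadraticMap

end Counting

section Hyperbolic

variable {m : ℕ}

variable (𝔽 m) in
def hypQuadForm : QuadraticForm 𝔽 (Fin (2 * m) → 𝔽) :=
  ∑ i : Fin m, QuadraticMap.proj ⟨2 * i.val, by omega⟩ ⟨2 * i.val + 1, by omega⟩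

theorem coe_hypQuadForm : ⇑(hypQuadForm 𝔽 m) = hypQ m := by
  ext v
  simp [hypQuadForm, hypQ, QuadraticMap.proj_apply]

theorem polar_hypQuadForm : QuadraticMap.polar (hypQuadForm 𝔽 m) = hypB m := by
  rw [coe_hypQuadForm]; rfl

theorem hypB_eq_sum (v w : Fin (2 * m) → 𝔽) :
    hypB m v w = ∑ i : Fin m,
      (v ⟨2 * i.val, by omega⟩ * w ⟨2 * i.val + 1, by omega⟩ +
        v ⟨2 * i.val + 1, by omega⟩ * w ⟨2 * i.val, by omega⟩) := by
  simp only [hypB, hypQ, Pi.add_apply, ← Finset.sum_sub_distrib]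
  congr! 1 with i
  ring

theorem hypB_comm (v w : Fin (2 * m) → 𝔽) : hypB m v w = hypB m w v := by
  rw [← polar_hypQuadForm]
  exact QuadraticMap.polar_comm _ _ _

theorem separatingLeft_polarBilin_hypQuadForm :
    (hypQuadForm 𝔽 m).polarBilin.SeparatingLeft := by
  intro v hv
  simp only [QuadraticMap.polarBilin_apply_apply, polar_hypQuadForm, hypB_eq_sum] at hv
  ext ⟨j, hj⟩
  have hsum (k : ℕ) (hk : k < m) (f : Fin m → 𝔽) :
      (∑ i : Fin m, if i.val = k then f i else 0) = f ⟨k, hk⟩ :=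
    (Finset.sum_eq_single_of_mem ⟨k, hk⟩ (Finset.mem_univ _) fun i _ hi =>
      if_neg fun h => hi (Fin.ext h)).trans (if_pos rfl)
  obtain ⟨k, rfl | rfl⟩ := Nat.even_or_odd' j
  · simpa [Pi.single_apply, Fin.ext_iff, Nat.two_mul_ne_two_mul_add_one, hsum k (by omega)]
      using hv (Pi.single ⟨2 * k + 1, by omega⟩ 1)
  · simpa [Pi.single_apply, Fin.ext_iff, Nat.two_mul_ne_two_mul_add_one.symm, hsum k (by omega)]
      using hv (Pi.single ⟨2 * k, by omega⟩ 1)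

variable {P P' P₀ : Projectivization 𝔽 (Fin (2 * m) → 𝔽)}

theorem collin_comm : Collin P P' ↔ Collin P' P := by
  rw [Collin, Collin, hypB_comm]

theorem mem_perp_self (hP : P ∈ Qset 𝔽 m) : P ∈ perp P := by
  refine ⟨hP, ?_⟩
  have hQ : hypQuadForm 𝔽 m P.rep = 0 := by rw [coe_hypQuadForm]; exact hP
  simp [Collin, ← polar_hypQuadForm, QuadraticMap.polar_self, hQ]

theorem perp_inter_perp (P : Projectivization 𝔽 (Fin (2 * m) → 𝔽)) :
    perp P₀ ∩ perp P = perp P₀ ∩ {P' | Collin P P'} := by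
  ext
  simp only [perp, Set.mem_inter_iff, Set.mem_ofPred_eq]
  tauto

theorem ncard_not_collinear_collinear [Finite 𝔽] (hP₀ : P₀ ∈ Qset 𝔽 m) (hP' : P' ∈ perp P₀)
    (hne : P' ≠ P₀) :
    {P ∈ Qset 𝔽 m \ perp P₀ | Collin P P'}.ncard = Nat.card 𝔽 ^ (2 * m - 3) := by
  have hind (c : 𝔽) (hc : P₀.rep = c • P'.rep) : False := by
    refine hne ?_
    rw [← P'.mk_rep, ← P₀.mk_rep]
    exact ((Projectivization.mk_eq_mk_iff' 𝔽 _ _ _ _).2 ⟨c, hc.symm⟩).symm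
  have key := QuadraticMap.card_pow_three_mul_card_isotropic_points_perp_not_perp
    (hypQuadForm 𝔽 m) separatingLeft_polarBilin_hypQuadForm
    (by rw [coe_hypQuadForm]; exact hP₀) P'.rep_nonzero
    (by rw [polar_hypQuadForm]; exact collin_comm.1 hP'.2) hind
  rw [Nat.card_fun, Nat.card_fin] at key
  rw [← Nat.card_coe_set_eq]
  refine Nat.eq_pow_sub_of_pow_mul_eq Finite.one_lt_card (key ▸ ?_)
  congr 1
  refine Nat.card_congr (Equiv.subtypeEquivRight fun P => ?_)
  simp only [Set.mem_ofPred_eq, Set.mem_sdiff, Qset, perp, onQ, Collin]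
  rw [polar_hypQuadForm, coe_hypQuadForm, hypB_comm P₀.rep, hypB_comm P'.rep]
  tauto

end Hyperbolic

theorem double_sum_over_noncollinear_general
    {𝔽 : Type} [Field 𝔽] [Fintype 𝔽] (q n x : ℕ) (hq : Fintype.card 𝔽 = q)
    (μ : Projectivization 𝔽 (Fin (2 * n) → 𝔽) → ℤ)
    (hstar : PropStar q n x μ)
    (P0 : Projectivization 𝔽 (Fin (2 * n) → 𝔽)) (hP0 : P0 ∈ Qset 𝔽 n) :
    ∑ᶠ P2 ∈ Qset 𝔽 n \ perp P0, (∑ᶠ P' ∈ perp P0 ∩ perp P2, μ P') =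
      (q : ℤ) ^ (2 * n - 3) *
        (((q : ℤ) ^ (n - 1) - 1) * μ P0 + (x : ℤ) * thgeom q (n - 1)) := by
  subst hq
  have hfin : (perp P0).Finite := Set.toFinite _
  have hP0perp := mem_perp_self hP0
  have hself : {P2 ∈ Qset 𝔽 n \ perp P0 | Collin P2 P0}.ncard = 0 := by
    rw [Set.ncard_eq_zero, Set.eq_empty_iff_forall_notMem]
    exact fun P2 ⟨⟨hQ, hperp⟩, hcol⟩ => hperp ⟨hQ, collin_comm.1 hcol⟩
  have hrest : ∑ᶠ P' ∈ perp P0 \ {P0}, {P2 ∈ Qset 𝔽 n \ perp P0 | Collin P2 P'}.ncard • μ P' =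
      ∑ᶠ P' ∈ perp P0 \ {P0}, (Fintype.card 𝔽 : ℤ) ^ (2 * n - 3) * μ P' := by
    refine finsum_mem_congr rfl fun P' hP' => ?_
    rw [ncard_not_collinear_collinear hP0 hP'.1 hP'.2, nsmul_eq_mul, Nat.card_eq_fintype_card,
      Nat.cast_pow]
  have hstar0 := hstar P0 hP0
  rw [finsum_mem_eq_add_finsum_mem_sdiff_singleton _ hfin hP0perp] at hstar0
  simp_rw [perp_inter_perp]
  rw [finsum_mem_finsum_mem_inter_setOf (Set.toFinite _) hfin,
    finsum_mem_eq_add_finsum_mem_sdiff_singleton _ hfin hP0perp, hself, zero_smul, zero_add, hrest,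
    ← mul_finsum_mem' _ _ hfin.sdiff]
  linear_combination (Fintype.card 𝔽 : ℤ) ^ (2 * n - 3) * hstar0

/-- Let `μ` satisfy Property (*) with parameter `x > 0` on `Q⁺(2n−1,q)`
and let `P0` be a point of the quadric.  Then
`Σ_{P2 ∈ Q\P0⊥} Σ_{P'∈{P0,P2}⊥} μ(P') = q^{2n−3}·((q^{n−1}−1)·μ(P0) + x·θ_{n−2})`. -/
theorem double_sum_over_noncollinear
    {𝔽 : Type} [Field 𝔽] [Fintype 𝔽] (q n x : ℕ) (hq : Fintype.card 𝔽 = q) (hn : 2 ≤ n)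
    (hx : 0 < x)
    (μ : Projectivization 𝔽 (Fin (2 * n) → 𝔽) → ℤ)
    (hstar : PropStar q n x μ)
    (P0 : Projectivization 𝔽 (Fin (2 * n) → 𝔽)) (hP0 : P0 ∈ Qset 𝔽 n) :
    ∑ᶠ P2 ∈ Qset 𝔽 n \ perp P0, (∑ᶠ P' ∈ perp P0 ∩ perp P2, μ P') =
      (q : ℤ) ^ (2 * n - 3) *
        (((q : ℤ) ^ (n - 1) - 1) * μ P0 + (x : ℤ) * thgeom q (n - 1)) :=
  double_sum_over_noncollinear_general q n x hq μ hstar P0 hP0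
end

section
/- Let Q = Q+(2n−1,q) with n ≥ 2, let μ be an integer-valued function on the points of Q satisfying Property (*) with parameter x (x a positive integer), and let ℓ0 be a projective line entirely contained in Q. Then q·Σ_{P∈ℓ0⊥} μ(P) + x·θ_{n−1} = q^{n−1}·Σ_{P∈ℓ0} μ(P) + (q+1)·x·θ_{n−2}, where ℓ0⊥ denotes the set of points of Q collinear with every point of ℓ0, and the second sum ranges over the q+1 projective points of ℓ0. -/
variable {𝔽 : Type} [Field 𝔽]

/-!
Summing Property (*) over the points of `ℓ0` and exchanging the order of summation counts each
point `P₁` of the quadric once for every point of `ℓ0` collinear with it: `q + 1` times if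
`P₁ ∈ ℓ0⊥`, and once otherwise, because the polar hyperplane of `P₁` then meets `ℓ0` in a point.
This gives `Σ_Q μ + q Σ_{ℓ0⊥} μ = q^{n-1} Σ_{ℓ0} μ + (q+1) x θ_{n-2}`. Summing (*) over the whole
quadric in the same way, with `|Q| = θ_{n-1} (q^{n-1} + 1)` and `|P⊥| = |Q| - q^{2n-2}`, gives
`Σ_Q μ = x θ_{n-1}`. Both point counts come from splitting off a hyperbolic pair `u, w`: every
vector is uniquely `z + s u + t w` with `z ⊥ u, w`, and then `f(z + s u + t w) = f(z) + s t`.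
-/

open Module QuadraticMap
open scoped LinearAlgebra.Projectivization

section DoubleCounting

variable {α β : Type*} [Finite α]

theorem finsum_mem_finsum_mem_sep_eq {R : Type*} [AddCommMonoid R] [Finite β] (A : Set α)
    (B : Set β) (r : α → β → Prop) (f : β → R) :
    ∑ᶠ a ∈ A, ∑ᶠ b ∈ {b ∈ B | r a b}, f b = ∑ᶠ b ∈ B, {a ∈ A | r a b}.ncard • f b := by
  classical
  have := Fintype.ofFinite α
  have := Fintype.ofFinite β
  simp only [finsum_mem_eq_toFinset_sum, Set.ncard_eq_toFinset_card', ← Finset.sum_const]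
  convert Finset.sum_sum_bipartiteAbove_eq_sum_sum_bipartiteBelow r (fun _ b => f b) using 3 <;>
    ext <;> simp [Finset.bipartiteAbove, Finset.bipartiteBelow]

theorem finsum_mem_const_add_mul {R : Type*} [Semiring R] (s : Set α) (c d : R) (f : α → R) :
    ∑ᶠ a ∈ s, (c + d * f a) = s.ncard * c + d * ∑ᶠ a ∈ s, f a := by
  classical
  have := Fintype.ofFinite α
  simp only [finsum_mem_eq_toFinset_sum, Finset.sum_add_distrib, Finset.sum_const,
    ← Finset.mul_sum, Set.ncard_eq_toFinset_card', nsmul_eq_mul]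

end DoubleCounting

section ProjectivePoints

variable {K V : Type*} [Field K] [AddCommGroup V] [Module K V]

theorem ncard_rep_mem_mul_add_one [Finite V] {s : Set V} (hs0 : (0 : V) ∈ s)
    (hs : ∀ (c : Kˣ) (v : V), c • v ∈ s ↔ v ∈ s) :
    {P : ℙ K V | P.rep ∈ s}.ncard * (Nat.card K - 1) + 1 = s.ncard := by
  have e : ↥(s \ {0}) ≃ {P : ℙ K V // P.rep ∈ s} × Kˣ :=
    ((Equiv.subtypeSubtypeEquivSubtypeInter (· ≠ 0) (· ∈ s)).trans
      (Equiv.subtypeEquivRight fun v => by simp [and_comm])).symm.trans <|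
    ((Projectivization.nonZeroEquivProjectivizationProdUnits K V).subtypeEquiv
      (q := fun p => p.1.rep ∈ s) fun v => by
        obtain ⟨a, ha⟩ := Projectivization.exists_smul_eq_mk_rep K v.1 v.2
        change _ ↔ (Projectivization.mk K v.1 v.2).rep ∈ s
        rw [← ha, hs]).trans
    (Equiv.prodSubtypeFstEquivSubtypeProd (p := fun P : ℙ K V => P.rep ∈ s))
  rw [← Set.ncard_sdiff_singleton_add_one hs0 s.toFinite, ← Nat.card_coe_set_eq (s \ _),
    Nat.card_congr e, Nat.card_prod, Nat.card_units, ← Nat.card_coe_set_eq]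
  rfl

theorem finrank_inf_ker_add_one [FiniteDimensional K V] {W : Submodule K V} {φ : V →ₗ[K] K}
    (hφ : ∃ v ∈ W, φ v ≠ 0) :
    finrank K ↥(W ⊓ LinearMap.ker φ) + 1 = finrank K W := by
  obtain ⟨v, hvW, hv⟩ := hφ
  have hψ : φ.domRestrict W ≠ 0 := fun h => hv (by simpa using LinearMap.congr_fun h ⟨v, hvW⟩)
  rw [← Submodule.map_comap_subtype, ← LinearMap.ker_domRestrict,
    Submodule.finrank_map_subtype_eq]
  exact Module.Dual.finrank_ker_add_one_of_ne_zero hψ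

variable [Finite K] [Finite V]

theorem ncard_rep_mem_submodule (W : Submodule K V) :
    {P : ℙ K V | P.rep ∈ W}.ncard = thgeom (Nat.card K) (finrank K W) := by
  have hq : 1 < Nat.card K := Finite.one_lt_card
  have h := ncard_rep_mem_mul_add_one (K := K) (s := (W : Set V)) W.zero_mem
    fun c v => W.smul_mem_iff' c
  rw [← Nat.card_coe_set_eq (W : Set V)] at h
  change {P : ℙ K V | P.rep ∈ W}.ncard * _ + 1 = Nat.card W at h
  rw [Module.natCard_eq_pow_finrank (K := K) (V := W)] at h
  rw [thgeom, Nat.geomSum_eq hq]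
  exact (Nat.div_eq_of_eq_mul_left (by omega) (by omega)).symm

theorem ncard_rep_mem_inter_ker {W : Submodule K V} {φ : V →ₗ[K] K} (hW : finrank K W = 2)
    (hφ : ∃ v ∈ W, φ v ≠ 0) : {P : ℙ K V | P.rep ∈ W ∧ φ P.rep = 0}.ncard = 1 := by
  have h := finrank_inf_ker_add_one hφ
  have h1 : finrank K ↥(W ⊓ LinearMap.ker φ) = 1 := by omega
  simpa [h1, thgeom] using ncard_rep_mem_submodule (W ⊓ LinearMap.ker φ)

end ProjectivePoints

section ZerosOfAddMul

variable {K : Type*} [Field K] [Finite K]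

theorem card_add_mul_eq_zero_add_one [DecidableEq K] (c : K) :
    Nat.card {p : K × K // c + p.1 * p.2 = 0} + 1 = Nat.card K * if c = 0 then 2 else 1 := by
  have := Fintype.ofFinite K
  have hfib (s : K) : Nat.card {t : K // c + s * t = 0} =
      if s = 0 then (if c = 0 then Nat.card K else 0) else 1 := by
    split_ifs with hs hc
    · simp [hs, hc]
    · simp [hs, hc]
    · rw [Nat.card_eq_one_iff_exists]
      exact ⟨⟨-c / s, by field_simp; ring⟩,
        fun ⟨t, ht⟩ => Subtype.ext (by field_simp; linear_combination ht)⟩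
  rw [Nat.card_congr (Equiv.subtypeProdEquivSigmaSubtype fun s t => c + s * t = 0),
    Nat.card_sigma, ← Finset.add_sum_erase _ _ (Finset.mem_univ 0)]
  simp only [hfib, if_pos, Finset.sum_ite_of_false (fun s hs => Finset.ne_of_mem_erase hs),
    Finset.sum_const, Finset.card_erase_of_mem (Finset.mem_univ _), Finset.card_univ,
    smul_eq_mul, mul_one, ← Nat.card_eq_fintype_card]
  have : 0 < Nat.card K := Nat.card_pos
  split_ifs <;> omega

theorem card_add_mul_eq_zero {A : Type*} [Finite A] (f : A → K) :
    Nat.card {p : A × K × K // f p.1 + p.2.1 * p.2.2 = 0} + Nat.card A =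
      Nat.card K * (Nat.card {a // f a = 0} + Nat.card A) := by
  classical
  have := Fintype.ofFinite A
  have hsplit : Nat.card {p : A × K × K // f p.1 + p.2.1 * p.2.2 = 0} =
      ∑ a, Nat.card {b : K × K // f a + b.1 * b.2 = 0} := by
    rw [← Nat.card_sigma]
    exact Nat.card_congr (Equiv.subtypeProdEquivSigmaSubtype (α := A) (β := K × K)
      fun a b => f a + b.1 * b.2 = 0)
  rw [hsplit, Nat.card_eq_fintype_card (α := A), ← Finset.card_univ, Finset.card_eq_sum_ones,
    ← Finset.sum_add_distrib]
  simp only [card_add_mul_eq_zero_add_one, ← Finset.mul_sum, Nat.card_eq_fintype_card,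
    Fintype.card_subtype]
  rw [Finset.card_filter, ← Finset.sum_add_distrib]
  congr 1
  exact Finset.sum_congr rfl fun a _ => by split_ifs <;> rfl

end ZerosOfAddMul

section HyperbolicPair

variable {K V : Type*} [Field K] [AddCommGroup V] [Module K V] (Q : QuadraticMap K V K) {u w : V}

theorem polar_self_eq_zero (hu : Q u = 0) : polar Q u u = 0 := by
  rw [polar_self, hu, smul_zero]

theorem exists_isotropic_polar_eq_one (hu : Q u = 0) (hw : polar Q u w ≠ 0) :
    ∃ w', Q w' = 0 ∧ polar Q u w' = 1 := by
  obtain ⟨w₁, hw₁⟩ : ∃ w₁, polar Q u w₁ = 1 :=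
    ⟨(polar Q u w)⁻¹ • w, by simp [polar_smul_right, hw]⟩
  refine ⟨w₁ - Q w₁ • u, ?_, ?_⟩
  · rw [sub_eq_add_neg, ← neg_smul, QuadraticMap.map_add (⇑Q), QuadraticMap.map_smul,
      polar_smul_right, polar_comm Q w₁, hu, hw₁]
    simp
  · simp [polar_sub_right, polar_smul_right, hw₁, polar_self_eq_zero Q hu]

def polarOrth (u w : V) : Submodule K V :=
  LinearMap.ker (polarBilin Q u) ⊓ LinearMap.ker (polarBilin Q w)

theorem mem_polarOrth {z : V} : z ∈ polarOrth Q u w ↔ polar Q u z = 0 ∧ polar Q w z = 0 := by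
  simp [polarOrth]

variable {Q}

def hyperbolicSplitting (hu : Q u = 0) (hw : Q w = 0) (huw : polar Q u w = 1) :
    polarOrth Q u w × K × K ≃ V where
  toFun p := p.1 + p.2.1 • u + p.2.2 • w
  invFun v := (⟨v - polar Q w v • u - polar Q u v • w, (mem_polarOrth Q).2 ⟨by
      simp [polar_sub_right, polar_smul_right, polar_self_eq_zero Q hu, huw], by
      simp [polar_sub_right, polar_smul_right, polar_self_eq_zero Q hw, polar_comm Q w u, huw]⟩⟩,
    polar Q w v, polar Q u v)
  left_inv := by
    rintro ⟨⟨z, hz⟩, s, t⟩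
    obtain ⟨hzu, hzw⟩ := (mem_polarOrth Q).1 hz
    simp only [polar_add_right, polar_smul_right, polar_self_eq_zero Q hu,
      polar_self_eq_zero Q hw, polar_comm Q w u, huw, hzu, hzw, smul_eq_mul, mul_zero, mul_one,
      zero_add, add_zero, Prod.mk.injEq, Subtype.mk.injEq, and_true]
    abel
  right_inv v := by dsimp only; abel

theorem hyperbolicSplitting_apply (hu : Q u = 0) (hw : Q w = 0) (huw : polar Q u w = 1)
    (p : polarOrth Q u w × K × K) :
    Q (hyperbolicSplitting hu hw huw p) = Q p.1 + p.2.1 * p.2.2 := by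
  obtain ⟨⟨z, hz⟩, s, t⟩ := p
  obtain ⟨hzu, hzw⟩ := (mem_polarOrth Q).1 hz
  simp [hyperbolicSplitting, QuadraticMap.map_add (⇑Q), QuadraticMap.map_smul, polar_add_left,
    polar_smul_left, polar_smul_right, polar_comm Q z, hu, hw, huw, hzu, hzw, mul_comm]

theorem polar_hyperbolicSplitting (hu : Q u = 0) (hw : Q w = 0) (huw : polar Q u w = 1)
    (p : polarOrth Q u w × K × K) :
    polar Q u (hyperbolicSplitting hu hw huw p) = p.2.2 := by
  obtain ⟨⟨z, hz⟩, s, t⟩ := p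
  simp [hyperbolicSplitting, polar_add_right, polar_smul_right, polar_self_eq_zero Q hu, huw,
    ((mem_polarOrth Q).1 hz).1]

theorem card_isotropic_and_polar_eq_zero [Finite K] [Finite V] (hu : Q u = 0)
    (hnd : ∃ w, polar Q u w ≠ 0) :
    Nat.card K ^ 2 * Nat.card {v // Q v = 0 ∧ polar Q u v = 0} + Nat.card K * Nat.card V =
      Nat.card K ^ 2 * Nat.card {v // Q v = 0} + Nat.card V := by
  obtain ⟨w₀, hw₀⟩ := hnd
  obtain ⟨w, hw, huw⟩ := exists_isotropic_polar_eq_one Q hu hw₀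
  set U := polarOrth Q u w
  have hV : Nat.card V = Nat.card U * Nat.card K ^ 2 := by
    rw [← Nat.card_congr (hyperbolicSplitting hu hw huw), Nat.card_prod, Nat.card_prod, pow_two]
  have hN : Nat.card {v // Q v = 0} = Nat.card {p : U × K × K // Q p.1 + p.2.1 * p.2.2 = 0} :=
    Nat.card_congr ((hyperbolicSplitting hu hw huw).subtypeEquiv fun p => by
      rw [hyperbolicSplitting_apply]).symm
  have hM : Nat.card {v // Q v = 0 ∧ polar Q u v = 0} = Nat.card {z : U // Q z = 0} * Nat.card K :=
    calc Nat.card {v // Q v = 0 ∧ polar Q u v = 0}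
        = Nat.card {p : U × K × K // Q p.1 = 0 ∧ p.2.2 = 0} :=
          Nat.card_congr ((hyperbolicSplitting hu hw huw).subtypeEquiv fun p => by
            rw [hyperbolicSplitting_apply, polar_hyperbolicSplitting]
            constructor <;> rintro ⟨h₁, h₂⟩ <;> simp_all).symm
      _ = Nat.card {z : U // Q z = 0} * Nat.card {b : K × K // b.2 = 0} := by
          rw [← Nat.card_prod]
          exact Nat.card_congr (Equiv.subtypeProdEquivProd (α := U) (β := K × K)
            (p := fun z => Q z = 0) (q := fun b => b.2 = 0))
      _ = Nat.card {z : U // Q z = 0} * Nat.card K := by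
          congr 1
          exact Nat.card_congr ⟨fun b => b.1.1, fun s => ⟨(s, 0), rfl⟩,
            fun ⟨⟨s, t⟩, ht⟩ => Subtype.ext (Prod.ext rfl ht.symm), fun s => rfl⟩
  have hfib := card_add_mul_eq_zero (fun z : U => Q z)
  rw [hN, hM, hV]
  nlinarith [hfib]

end HyperbolicPair

def hypForm (m : ℕ) : QuadraticMap 𝔽 (Fin (2 * m) → 𝔽) 𝔽 :=
  ∑ i : Fin m, proj ⟨2 * i, by omega⟩ ⟨2 * i + 1, by omega⟩

section HyperbolicForm

variable {m : ℕ}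

theorem hypForm_apply (v : Fin (2 * m) → 𝔽) : hypForm m v = hypQ m v := by
  simp [hypForm, hypQ]

theorem hypB_eq_polar (v w : Fin (2 * m) → 𝔽) : hypB m v w = polar (hypForm m) v w := by
  simp [hypB, polar, hypForm_apply]

theorem polar_hypForm_eq_sum (u v : Fin (2 * m) → 𝔽) :
    polar (hypForm m) u v = ∑ i : Fin m, (u ⟨2 * i, by omega⟩ * v ⟨2 * i + 1, by omega⟩ +
      u ⟨2 * i + 1, by omega⟩ * v ⟨2 * i, by omega⟩) := by
  simp only [polar, hypForm_apply, hypQ, Pi.add_apply, ← Finset.sum_sub_distrib]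
  exact Finset.sum_congr rfl fun i _ => by ring

theorem polar_hypForm_single_odd (u : Fin (2 * m) → 𝔽) (i : Fin m) :
    polar (hypForm m) u (Pi.single ⟨2 * i + 1, by omega⟩ 1) = u ⟨2 * i, by omega⟩ := by
  rw [polar_hypForm_eq_sum, Finset.sum_eq_single i]
  · simp
  · intro j _ hj
    have hji : (j : ℕ) ≠ i := Fin.val_ne_of_ne hj
    rw [Pi.single_eq_of_ne (by simp only [ne_eq, Fin.mk.injEq]; omega),
      Pi.single_eq_of_ne (by simp only [ne_eq, Fin.mk.injEq]; omega), mul_zero, mul_zero, add_zero]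
  · simp

theorem polar_hypForm_single_even (u : Fin (2 * m) → 𝔽) (i : Fin m) :
    polar (hypForm m) u (Pi.single ⟨2 * i, by omega⟩ 1) = u ⟨2 * i + 1, by omega⟩ := by
  rw [polar_hypForm_eq_sum, Finset.sum_eq_single i]
  · simp
  · intro j _ hj
    have hji : (j : ℕ) ≠ i := Fin.val_ne_of_ne hj
    rw [Pi.single_eq_of_ne (by simp only [ne_eq, Fin.mk.injEq]; omega),
      Pi.single_eq_of_ne (by simp only [ne_eq, Fin.mk.injEq]; omega), mul_zero, mul_zero, add_zero]
  · simp

theorem exists_polar_hypForm_ne_zero {u : Fin (2 * m) → 𝔽} (hu : u ≠ 0) :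
    ∃ w, polar (hypForm m) u w ≠ 0 := by
  obtain ⟨j, hj⟩ : ∃ j, u j ≠ 0 := Function.ne_iff.mp hu
  obtain ⟨i, hi | hi⟩ := Nat.even_or_odd' j
  · have hi' : i < m := by omega
    refine ⟨Pi.single ⟨2 * i + 1, by omega⟩ 1, ?_⟩
    rw [polar_hypForm_single_odd u ⟨i, hi'⟩]
    convert hj using 2
    exact Fin.ext hi.symm
  · have hi' : i < m := by omega
    refine ⟨Pi.single ⟨2 * i, by omega⟩ 1, ?_⟩
    rw [polar_hypForm_single_even u ⟨i, hi'⟩]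
    convert hj using 2
    exact Fin.ext hi.symm

end HyperbolicForm

theorem card_hypForm_eq_zero [Finite 𝔽] (m : ℕ) :
    Nat.card 𝔽 * Nat.card {v : Fin (2 * m) → 𝔽 // hypForm m v = 0} + Nat.card 𝔽 ^ m =
      Nat.card 𝔽 ^ (2 * m) + Nat.card 𝔽 ^ (m + 1) := by
  induction m with
  | zero =>
    have h0 (v : Fin (2 * 0) → 𝔽) : hypForm 0 v = 0 := by simp [hypForm]
    rw [Nat.card_congr (Equiv.subtypeUnivEquiv h0), Nat.card_fun]
    simp [add_comm]
  | succ m ih =>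
    let e : (Fin (2 * m + 2) → 𝔽) ≃ (Fin (2 * m) → 𝔽) × 𝔽 × 𝔽 :=
      (Fin.appendEquiv (2 * m) 2).symm.trans ((Equiv.refl _).prodCongr (finTwoArrowEquiv 𝔽))
    have he (v : Fin (2 * (m + 1)) → 𝔽) :
        hypForm (m + 1) v = hypForm m (e v).1 + (e v).2.1 * (e v).2.2 := by
      simp only [hypForm_apply, hypQ]
      rw [Fin.sum_univ_castSucc]
      rfl
    have hN : Nat.card {v : Fin (2 * (m + 1)) → 𝔽 // hypForm (m + 1) v = 0} =
        Nat.card {p : (Fin (2 * m) → 𝔽) × 𝔽 × 𝔽 // hypForm m p.1 + p.2.1 * p.2.2 = 0} :=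
      Nat.card_congr (e.subtypeEquiv fun v => by rw [he])
    have hstep := card_add_mul_eq_zero (fun a : Fin (2 * m) → 𝔽 => hypForm m a)
    rw [← hN, Nat.card_fun, Nat.card_eq_fintype_card (α := Fin (2 * m)), Fintype.card_fin] at hstep
    linear_combination Nat.card 𝔽 * hstep + Nat.card 𝔽 * ih

theorem thgeom_mul_sub_one (q k : ℕ) : (thgeom q k : ℤ) * (q - 1) = (q : ℤ) ^ k - 1 := by
  simpa [thgeom] using geom_sum_mul (q : ℤ) k

section QuadricPoints

variable {m : ℕ}

theorem collin_iff {P P' : ℙ 𝔽 (Fin (2 * m) → 𝔽)} :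
    Collin P P' ↔ polar (hypForm m) P'.rep P.rep = 0 := by
  rw [Collin, hypB_eq_polar, polar_comm]

variable [Finite 𝔽]

theorem ncard_Qset_mul_add_one :
    (Qset 𝔽 m).ncard * (Nat.card 𝔽 - 1) + 1 =
      Nat.card {v : Fin (2 * m) → 𝔽 // hypForm m v = 0} := by
  have hQ : Qset 𝔽 m = {P | P.rep ∈ {v | hypForm m v = 0}} := by
    ext P; simp [Qset, onQ, hypForm_apply]
  rw [hQ, ncard_rep_mem_mul_add_one (by simp)
    fun c v => by simp [QuadraticMap.map_smul, Units.smul_def], ← Nat.card_coe_set_eq]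
  rfl

theorem ncard_sep_collin_mul_add_one (P₁ : ℙ 𝔽 (Fin (2 * m) → 𝔽)) :
    {P ∈ Qset 𝔽 m | Collin P P₁}.ncard * (Nat.card 𝔽 - 1) + 1 =
      Nat.card {v : Fin (2 * m) → 𝔽 // hypForm m v = 0 ∧ polar (hypForm m) P₁.rep v = 0} := by
  have hQ : {P ∈ Qset 𝔽 m | Collin P P₁} =
      {P | P.rep ∈ {v | hypForm m v = 0 ∧ polar (hypForm m) P₁.rep v = 0}} := by
    ext P; simp [Qset, onQ, hypForm_apply, collin_iff]
  rw [hQ, ncard_rep_mem_mul_add_one (by simp)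
    fun c v => by simp [QuadraticMap.map_smul, polar_smul_right, Units.smul_def],
    ← Nat.card_coe_set_eq]
  rfl

theorem ncard_Qset :
    (Qset 𝔽 (m + 1)).ncard = thgeom (Nat.card 𝔽) (m + 1) * (Nat.card 𝔽 ^ m + 1) := by
  have hq : 1 < Nat.card 𝔽 := Finite.one_lt_card
  have hX := ncard_Qset_mul_add_one (𝔽 := 𝔽) (m := m + 1)
  have hN := card_hypForm_eq_zero (𝔽 := 𝔽) (m + 1)
  have hT := thgeom_mul_sub_one (Nat.card 𝔽) (m + 1)
  set q := Nat.card 𝔽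
  zify [hq.le] at hX hN ⊢
  -- both sides times `q (q - 1)` equal `(q^{m+1} - 1) (q^{m+1} + q)`
  apply mul_left_cancel₀ (show (q : ℤ) * (q - 1) ≠ 0 by
    have : (1 : ℤ) < q := by exact_mod_cast hq
    positivity)
  linear_combination q * hX + hN - q * ((q : ℤ) ^ m + 1) * hT

theorem ncard_sep_collin_add {P₁ : ℙ 𝔽 (Fin (2 * (m + 1)) → 𝔽)} (hP₁ : P₁ ∈ Qset 𝔽 (m + 1)) :
    {P ∈ Qset 𝔽 (m + 1) | Collin P P₁}.ncard + Nat.card 𝔽 ^ (2 * m) = (Qset 𝔽 (m + 1)).ncard := by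
  have hq : 1 < Nat.card 𝔽 := Finite.one_lt_card
  have hu : hypForm (m + 1) P₁.rep = 0 := by rwa [hypForm_apply]
  have hcount := card_isotropic_and_polar_eq_zero hu
    (exists_polar_hypForm_ne_zero P₁.rep_nonzero)
  have hX := ncard_Qset_mul_add_one (𝔽 := 𝔽) (m := m + 1)
  have hY := ncard_sep_collin_mul_add_one P₁
  rw [Nat.card_fun, Nat.card_eq_fintype_card (α := Fin _), Fintype.card_fin] at hcount
  set q := Nat.card 𝔽
  zify [hq.le] at hX hY hcount ⊢
  apply mul_left_cancel₀ (show (q : ℤ) ^ 2 * (q - 1) ≠ 0 by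
    have : (1 : ℤ) < q := by exact_mod_cast hq
    positivity)
  linear_combination q ^ 2 * hY - q ^ 2 * hX + hcount

end QuadricPoints

section Lines

variable [Finite 𝔽] {m : ℕ} {ℓ : Submodule 𝔽 (Fin (2 * m) → 𝔽)}

theorem ncard_pts (hℓ : finrank 𝔽 ℓ = 2) : (pts ℓ).ncard = Nat.card 𝔽 + 1 := by
  simpa [pts, thgeom, hℓ, add_comm] using ncard_rep_mem_submodule ℓ

theorem ncard_pts_sep_collin (hℓ : finrank 𝔽 ℓ = 2) {P₁ : ℙ 𝔽 (Fin (2 * m) → 𝔽)}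
    (hP₁ : ¬ ∀ P ∈ pts ℓ, Collin P P₁) : {P ∈ pts ℓ | Collin P P₁}.ncard = 1 := by
  have h : {P ∈ pts ℓ | Collin P P₁} =
      {P | P.rep ∈ ℓ ∧ polarBilin (hypForm m) P₁.rep P.rep = 0} := by
    ext P; simp [pts, collin_iff]
  rw [h]
  push Not at hP₁
  obtain ⟨P, hPℓ, hP⟩ := hP₁
  exact ncard_rep_mem_inter_ker hℓ ⟨P.rep, hPℓ, by simpa [collin_iff] using hP⟩

end Lines

section Sums

variable [Finite 𝔽] {q n x : ℕ} {μ : ℙ 𝔽 (Fin (2 * n) → 𝔽) → ℤ}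

theorem finsum_finsum_perp (hstar : PropStar q n x μ) {A : Set (ℙ 𝔽 (Fin (2 * n) → 𝔽))}
    (hA : A ⊆ Qset 𝔽 n) :
    ∑ᶠ P ∈ A, ∑ᶠ P₁ ∈ perp P, μ P₁ =
      A.ncard * (x * thgeom q (n - 1)) + q ^ (n - 1) * ∑ᶠ P ∈ A, μ P := by
  rw [← finsum_mem_const_add_mul]
  exact finsum_mem_congr rfl fun P hP => hstar P (hA hP)

theorem finsum_Qset (hq : Nat.card 𝔽 = q) (hn : 2 ≤ n) (hstar : PropStar q n x μ) :
    ∑ᶠ P ∈ Qset 𝔽 n, μ P = x * thgeom q n := by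
  subst hq
  obtain ⟨k, rfl⟩ : ∃ k, n = k + 2 := ⟨n - 2, by omega⟩
  have hdc := finsum_mem_finsum_mem_sep_eq (Qset 𝔽 (k + 2)) (Qset 𝔽 (k + 2)) Collin μ
  change ∑ᶠ P ∈ Qset 𝔽 (k + 2), ∑ᶠ P₁ ∈ perp P, μ P₁ = _ at hdc
  have hY : ∀ P₁ ∈ Qset 𝔽 (k + 2), {P ∈ Qset 𝔽 (k + 2) | Collin P P₁}.ncard • μ P₁ =
      (((Qset 𝔽 (k + 2)).ncard : ℤ) - Nat.card 𝔽 ^ (2 * (k + 1))) * μ P₁ := fun P₁ hP₁ => by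
    rw [nsmul_eq_mul, ← ncard_sep_collin_add hP₁]
    push_cast
    ring
  rw [finsum_finsum_perp hstar subset_rfl, finsum_mem_congr rfl hY, ← mul_finsum_mem,
    ncard_Qset] at hdc
  have hT : thgeom (Nat.card 𝔽) (k + 2) = thgeom (Nat.card 𝔽) (k + 1) + Nat.card 𝔽 ^ (k + 1) :=
    Finset.sum_range_succ _ _
  simp only [show k + 2 - 1 = k + 1 from rfl, hT] at hdc ⊢
  have hpos : 0 < thgeom (Nat.card 𝔽) (k + 1) := by simp [thgeom, Finset.sum_range_succ']
  have hc : ((Nat.card 𝔽 : ℤ) ^ (k + 1) + 1) * thgeom (Nat.card 𝔽) (k + 1) ≠ 0 := by positivity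
  -- with `S = Σ_Q μ`, `hdc` reads `|Q| x θ_{n-2} + q^{n-1} S = (|Q| - q^{2n-2}) S`,
  -- and `|Q| - q^{n-1} - q^{2n-2} = (q^{n-1} + 1) θ_{n-2}`
  apply mul_left_cancel₀ hc
  push_cast at hdc ⊢
  linear_combination -hdc

theorem finsum_Qset_add_finsum_linePerp (hq : Nat.card 𝔽 = q) (hstar : PropStar q n x μ)
    {ℓ : Submodule 𝔽 (Fin (2 * n) → 𝔽)} (hℓ : finrank 𝔽 ℓ = 2) (hℓQ : ∀ P ∈ pts ℓ, onQ P) :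
    ∑ᶠ P ∈ Qset 𝔽 n, μ P + q * ∑ᶠ P ∈ {P | P ∈ Qset 𝔽 n ∧ ∀ P' ∈ pts ℓ, Collin P' P}, μ P =
      q ^ (n - 1) * ∑ᶠ P ∈ pts ℓ, μ P + (q + 1) * x * thgeom q (n - 1) := by
  subst hq
  set T := {P₁ | ∀ P ∈ pts ℓ, Collin P P₁}
  have hdc := finsum_mem_finsum_mem_sep_eq (pts ℓ) (Qset 𝔽 n) Collin μ
  change ∑ᶠ P ∈ pts ℓ, ∑ᶠ P₁ ∈ perp P, μ P₁ = _ at hdc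
  have h_in : ∀ P₁ ∈ Qset 𝔽 n ∩ T, {P ∈ pts ℓ | Collin P P₁}.ncard • μ P₁ =
      ((Nat.card 𝔽 : ℤ) + 1) * μ P₁ := fun P₁ hP₁ => by
    rw [Set.sep_eq_self_iff_mem_true.mpr hP₁.2, ncard_pts hℓ, nsmul_eq_mul]
    push_cast
    rfl
  have h_out : ∀ P₁ ∈ Qset 𝔽 n \ T, {P ∈ pts ℓ | Collin P P₁}.ncard • μ P₁ = μ P₁ :=
    fun P₁ hP₁ => by rw [ncard_pts_sep_collin hℓ hP₁.2, one_smul]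
  rw [finsum_finsum_perp hstar hℓQ, ncard_pts hℓ,
    ← finsum_mem_inter_add_sdiff T (Set.toFinite (Qset 𝔽 n)),
    finsum_mem_congr rfl h_in, finsum_mem_congr rfl h_out, ← mul_finsum_mem] at hdc
  rw [← finsum_mem_inter_add_sdiff T (Set.toFinite (Qset 𝔽 n))]
  change _ + _ * ∑ᶠ P ∈ Qset 𝔽 n ∩ T, μ P = _
  push_cast at hdc ⊢
  linear_combination -hdc

end Sums

theorem line_perp_sum_identity_general
    {𝔽 : Type} [Field 𝔽] [Fintype 𝔽] (q n x : ℕ) (hq : Fintype.card 𝔽 = q) (hn : 2 ≤ n)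
    (μ : Projectivization 𝔽 (Fin (2 * n) → 𝔽) → ℤ)
    (hstar : PropStar q n x μ)
    (ℓ0 : Submodule 𝔽 (Fin (2 * n) → 𝔽))
    (hℓ0rank : Module.finrank 𝔽 ℓ0 = 2) (hℓ0Q : ∀ P ∈ pts ℓ0, onQ P) :
    (q : ℤ) * (∑ᶠ P ∈ {P | P ∈ Qset 𝔽 n ∧ ∀ P' ∈ pts ℓ0, Collin P' P}, μ P)
        + (x : ℤ) * thgeom q n =
      (q : ℤ) ^ (n - 1) * (∑ᶠ P ∈ pts ℓ0, μ P)
        + ((q : ℤ) + 1) * (x : ℤ) * thgeom q (n - 1) := by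
  have hq' : Nat.card 𝔽 = q := Nat.card_eq_fintype_card.trans hq
  have hQ := finsum_Qset hq' hn hstar
  have hline := finsum_Qset_add_finsum_linePerp hq' hstar hℓ0rank hℓ0Q
  linear_combination hline - hQ

/-- Let `μ` satisfy Property (*) with parameter `x > 0` on `Q⁺(2n−1,q)`
and let `ℓ0` be a projective line entirely contained in the quadric.  Then
`q·Σ_{P∈ℓ0⊥} μ(P) + x·θ_{n−1} = q^{n−1}·Σ_{P∈ℓ0} μ(P) + (q+1)·x·θ_{n−2}`,
where `ℓ0⊥` is the set of points of the quadric collinear with every point of `ℓ0`. -/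
theorem line_perp_sum_identity
    {𝔽 : Type} [Field 𝔽] [Fintype 𝔽] (q n x : ℕ) (hq : Fintype.card 𝔽 = q) (hn : 2 ≤ n)
    (hx : 0 < x)
    (μ : Projectivization 𝔽 (Fin (2 * n) → 𝔽) → ℤ)
    (hstar : PropStar q n x μ)
    (ℓ0 : Submodule 𝔽 (Fin (2 * n) → 𝔽))
    (hℓ0rank : Module.finrank 𝔽 ℓ0 = 2) (hℓ0Q : ∀ P ∈ pts ℓ0, onQ P) :
    (q : ℤ) * (∑ᶠ P ∈ {P | P ∈ Qset 𝔽 n ∧ ∀ P' ∈ pts ℓ0, Collin P' P}, μ P)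
        + (x : ℤ) * thgeom q n =
      (q : ℤ) ^ (n - 1) * (∑ᶠ P ∈ pts ℓ0, μ P)
        + ((q : ℤ) + 1) * (x : ℤ) * thgeom q (n - 1) :=
  line_perp_sum_identity_general q n x hq hn μ hstar ℓ0 hℓ0rank hℓ0Q
end
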